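/- Define H-ideals N_α of an H-module algebra R by transfinite recursion: N₀ = 0; N_{α+1}/N_α is the sum of all nilpotent H-ideals of R/N_α; N_β = Σ_{α<β} N_α for limit β. If τ is an ordinal with N_τ = N_{τ+1}, then N_τ = r_{Hb}(R) = ∩{ I : I is an H-semiprime ideal of R }. -/

import Mathlib

/-!
An `H`-ideal nilpotent modulo `N_τ` lies in `N_{τ+1} = N_τ`, so `N_τ` is `H`-semiprime, while
every `H`-semiprime ideal contains each `N_α` by transfinite induction; hence `N_τ` is the
intersection of the `H`-semiprime ideals. Each `N_α` is a radical `H`-ideal: a proper `H`-ideal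
`J` of `N_α` fails to contain, at the first step where the chain leaves `J`, some `H`-ideal `K`
nilpotent modulo the previous term, and then `(K + J)/J` is a non-zero nilpotent `H`-ideal of
`N_α/J`. Conversely a radical `H`-ideal lies in every `H`-semiprime ideal `P`, because the
`H`-ideal of `R` generated by a nilpotent `H`-ideal `K/(I ∩ P)` of `I/(I ∩ P)` has its triple
products in `K`, hence is nilpotent modulo `P`.
-/

open scoped TensorProduct

class HModAlg (k H R : Type*) [CommRing k] [Ring H] [Algebra k H]
    [Coalgebra k H] [NonUnitalRing R] [Module k R]
    [SMulCommClass k R R] [IsScalarTower k R R] where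
  hsmul : H →ₗ[k] R →ₗ[k] R
  one_hsmul : ∀ r : R, hsmul 1 r = r
  mul_hsmul : ∀ (h h' : H) (r : R), hsmul (h * h') r = hsmul h (hsmul h' r)
  hsmul_mul : ∀ (h : H) (a b : R),
    hsmul h (a * b) =
      LinearMap.mul' k R
        (TensorProduct.map (hsmul.flip a) (hsmul.flip b) (Coalgebra.comul h))

/-- product f 0 * f 1 * ⋯ * f n -/
def prodSeq {R : Type*} [Mul R] (f : ℕ → R) : ℕ → R
  | 0 => f 0
  | n + 1 => prodSeq f n * f (n + 1)

/-- `I` is a nilpotent subset: some power of it vanishes. -/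
def IsNilpotentSet {R : Type*} [Mul R] [Zero R] (I : Set R) : Prop :=
  ∃ n : ℕ, ∀ f : ℕ → R, (∀ i, f i ∈ I) → prodSeq f n = 0

/-- `I` is nilpotent modulo `J`. -/
def IsNilpotentSetMod {R : Type*} [Mul R] (I J : Set R) : Prop :=
  ∃ n : ℕ, ∀ f : ℕ → R, (∀ i, f i ∈ I) → prodSeq f n ∈ J

section Defs

variable (k H : Type*) {R : Type*} [CommRing k] [Ring H] [Algebra k H]
  [Coalgebra k H] [NonUnitalRing R] [Module k R]
  [SMulCommClass k R R] [IsScalarTower k R R] [HModAlg k H R]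

/-- The action of `h : H` on `r : R`. -/
def hact (h : H) (r : R) : R := HModAlg.hsmul (k := k) h r

/-- `I` is an `H`-ideal of the `H`-module (sub)algebra `B ⊆ R`. -/
structure IsHIdealIn (B I : Set R) : Prop where
  subset : I ⊆ B
  zero_mem : (0 : R) ∈ I
  add_mem : ∀ {x y : R}, x ∈ I → y ∈ I → x + y ∈ I
  neg_mem : ∀ {x : R}, x ∈ I → -x ∈ I
  mul_mem_left : ∀ {x : R}, x ∈ B → ∀ {y : R}, y ∈ I → x * y ∈ I
  mul_mem_right : ∀ {x : R}, x ∈ I → ∀ {y : R}, y ∈ B → x * y ∈ I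
  hsmul_mem : ∀ (h : H) {x : R}, x ∈ I → hact k H h x ∈ I

/-- `I` is an `H`-ideal of `R`. -/
def IsHIdeal (I : Set R) : Prop := IsHIdealIn k H Set.univ I

/-- `R` is `H`-semiprime. -/
def IsHSemiprime : Prop :=
  ∀ I : Set R, IsHIdeal k H I → IsNilpotentSet I → I = {0}

/-- The subalgebra `B` of `R` is `H`-semiprime. -/
def IsHSemiprimeIn (B : Set R) : Prop :=
  ∀ I : Set R, IsHIdealIn k H B I → IsNilpotentSet I → I = {0}

/-- `R` is `H`-prime. -/
def IsHPrime : Prop :=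
  ∀ I J : Set R, IsHIdeal k H I → IsHIdeal k H J →
    (∀ a ∈ I, ∀ b ∈ J, a * b = 0) → I = {0} ∨ J = {0}

/-- The `H`-ideal of `R` generated by `E`. -/
def genHIdeal (E : Set R) : Set R := ⋂₀ {I : Set R | IsHIdeal k H I ∧ E ⊆ I}

end Defs


section Radical

variable (k H : Type*) {R : Type*} [CommRing k] [Ring H] [Algebra k H]
  [Coalgebra k H] [NonUnitalRing R] [Module k R]
  [SMulCommClass k R R] [IsScalarTower k R R] [HModAlg k H R]

/-- The `H`-ideal `I` is a radical (`r_{Hb}`-) `H`-ideal: every non-zero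
`H`-homomorphic image of `I` (equivalently, every quotient `I/J` of `I` by a proper
`H`-ideal `J` of `I`) contains a non-zero nilpotent `H`-ideal `K/J`. -/
def IsRadicalHIdeal (I : Set R) : Prop :=
  IsHIdeal k H I ∧
    ∀ J : Set R, IsHIdealIn k H I J → J ≠ I →
      ∃ K : Set R, IsHIdealIn k H I K ∧ J ⊆ K ∧ J ≠ K ∧ IsNilpotentSetMod K J

/-- `B` is the `H`-Baer radical of `R`: the largest radical `H`-ideal of `R`. -/
def IsHBaerRadical (B : Set R) : Prop :=
  IsRadicalHIdeal k H B ∧ ∀ I : Set R, IsRadicalHIdeal k H I → I ⊆ B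

end Radical

/-- `P` is an `H`-semiprime ideal of `R` (i.e. `R/P` has no non-zero nilpotent
`H`-ideals). -/
def IsHSemiprimeIdeal (k H : Type*) {R : Type*} [CommRing k] [Ring H] [Algebra k H]
    [Coalgebra k H] [NonUnitalRing R] [Module k R] [SMulCommClass k R R]
    [IsScalarTower k R R] [HModAlg k H R] (P : Set R) : Prop :=
  IsHIdeal k H P ∧ ∀ K : Set R, IsHIdeal k H K → IsNilpotentSetMod K P → K ⊆ P


open scoped Pointwise
open Set

section Products

variable {M : Type*}

lemma prodSeq_succ [Mul M] (f : ℕ → M) (n : ℕ) :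
    prodSeq f (n + 1) = prodSeq f n * f (n + 1) := rfl

lemma prodSeq_three_mul_add_two [Semigroup M] (f : ℕ → M) (m : ℕ) :
    prodSeq f (3 * m + 2) =
      prodSeq (fun i => f (3 * i) * f (3 * i + 1) * f (3 * i + 2)) m := by
  induction m with
  | zero => rfl
  | succ m ih =>
    rw [show 3 * (m + 1) + 2 = 3 * m + 2 + 1 + 1 + 1 by ring, prodSeq_succ, prodSeq_succ,
      prodSeq_succ, ih, prodSeq_succ]
    simp only [mul_assoc]
    ring_nf

lemma IsNilpotentSetMod.mono [Mul M] {K J J' : Set M} (hK : IsNilpotentSetMod K J)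
    (hJ : J ⊆ J') : IsNilpotentSetMod K J' :=
  let ⟨n, hn⟩ := hK
  ⟨n, fun f hf => hJ (hn f hf)⟩

lemma isNilpotentSetMod_self [Mul M] (J : Set M) : IsNilpotentSetMod J J :=
  ⟨0, fun _ hf => hf 0⟩

lemma IsNilpotentSetMod.of_mul_mul_mem [Semigroup M] {L K J : Set M}
    (hLK : ∀ a ∈ L, ∀ b ∈ L, ∀ c ∈ L, a * b * c ∈ K) (hK : IsNilpotentSetMod K J) :
    IsNilpotentSetMod L J := by
  obtain ⟨n, hn⟩ := hK
  refine ⟨3 * n + 2, fun f hf => ?_⟩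
  rw [prodSeq_three_mul_add_two]
  exact hn _ fun i => hLK _ (hf _) _ (hf _) _ (hf _)

end Products

section HIdeals

variable {k H R : Type*} [CommRing k] [Ring H] [Algebra k H] [Coalgebra k H]
  [NonUnitalRing R] [Module k R] [SMulCommClass k R R] [IsScalarTower k R R] [HModAlg k H R]

lemma hact_zero (h : H) : hact k H h (0 : R) = 0 :=
  map_zero (HModAlg.hsmul (k := k) (R := R) h)

lemma hact_add (h : H) (x y : R) : hact k H h (x + y) = hact k H h x + hact k H h y :=
  map_add (HModAlg.hsmul (k := k) (R := R) h) x y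

lemma hact_neg (h : H) (x : R) : hact k H h (-x) = -hact k H h x :=
  map_neg (HModAlg.hsmul (k := k) (R := R) h) x

/-- `h • (a * b) = ∑ (h₍₁₎ • a) * (h₍₂₎ • b)` in Sweedler notation. -/
lemma hact_mul_mem {S : Type*} [SetLike S R] [AddSubmonoidClass S R] {s : S} {a b : R}
    (hab : ∀ h₁ h₂ : H, hact k H h₁ a * hact k H h₂ b ∈ s) (h : H) :
    hact k H h (a * b) ∈ s := by
  change HModAlg.hsmul (k := k) h (a * b) ∈ s
  rw [HModAlg.hsmul_mul]
  induction (Coalgebra.comul h : H ⊗[k] H) using TensorProduct.induction_on with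
  | zero => simp
  | tmul h₁ h₂ => simpa [hact] using hab h₁ h₂
  | add x y hx hy =>
    rw [map_add, map_add]
    exact add_mem hx hy

def IsHIdealIn.toAddSubgroup {B I : Set R} (hI : IsHIdealIn k H B I) : AddSubgroup R where
  carrier := I
  zero_mem' := hI.zero_mem
  add_mem' := hI.add_mem
  neg_mem' := hI.neg_mem

lemma IsHIdeal.isHIdealIn {B I : Set R} (hI : IsHIdeal k H I) (hIB : I ⊆ B) :
    IsHIdealIn k H B I :=
  ⟨hIB, hI.zero_mem, hI.add_mem, hI.neg_mem, fun {_} _ => hI.mul_mem_left trivial,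
    fun {_} hx {_} _ => hI.mul_mem_right hx trivial, hI.hsmul_mem⟩

lemma isHIdeal_of_hact_mem (I : TwoSidedIdeal R) (hI : ∀ (h : H), ∀ x ∈ I, hact k H h x ∈ I) :
    IsHIdeal k H (I : Set R) :=
  ⟨subset_univ _, I.zero_mem, I.add_mem, I.neg_mem, fun {_} _ {_} hy => I.mul_mem_left _ _ hy,
    fun {_} hx {_} _ => I.mul_mem_right _ _ hx, fun h {x} => hI h x⟩

lemma isHIdeal_zero : IsHIdeal k H ({0} : Set R) := by
  simpa using isHIdeal_of_hact_mem (k := k) (H := H) (⊥ : TwoSidedIdeal R)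
    (by simp [hact_zero])

lemma isHIdeal_sInter {S : Set (Set R)} (hS : ∀ I ∈ S, IsHIdeal k H I) :
    IsHIdeal k H (⋂₀ S) :=
  ⟨subset_univ _, fun I hI => (hS I hI).zero_mem,
    fun hx hy I hI => (hS I hI).add_mem (hx I hI) (hy I hI),
    fun hx I hI => (hS I hI).neg_mem (hx I hI),
    fun {_} _ {_} hy I hI => (hS I hI).mul_mem_left trivial (hy I hI),
    fun {_} hx {_} _ I hI => (hS I hI).mul_mem_right (hx I hI) trivial,
    fun h _ hx I hI => (hS I hI).hsmul_mem h (hx I hI)⟩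

lemma isHIdeal_iUnion_of_directed {ι : Type*} [Nonempty ι] {I : ι → Set R}
    (hI : ∀ i, IsHIdeal k H (I i)) (hdir : Directed (· ⊆ ·) I) :
    IsHIdeal k H (⋃ i, I i) := by
  refine ⟨subset_univ _, mem_iUnion.2 ⟨Classical.arbitrary ι, (hI _).zero_mem⟩, ?_, ?_, ?_, ?_, ?_⟩
  · simp only [mem_iUnion]
    rintro x y ⟨i, hx⟩ ⟨j, hy⟩
    obtain ⟨l, hil, hjl⟩ := hdir i j
    exact ⟨l, (hI l).add_mem (hil hx) (hjl hy)⟩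
  · simp only [mem_iUnion]
    rintro x ⟨i, hx⟩
    exact ⟨i, (hI i).neg_mem hx⟩
  · simp only [mem_iUnion]
    rintro x - y ⟨i, hy⟩
    exact ⟨i, (hI i).mul_mem_left trivial hy⟩
  · simp only [mem_iUnion]
    rintro x ⟨i, hx⟩ y -
    exact ⟨i, (hI i).mul_mem_right hx trivial⟩
  · simp only [mem_iUnion]
    rintro h x ⟨i, hx⟩
    exact ⟨i, (hI i).hsmul_mem h hx⟩

/-- The `x` with `h • x ∈ span s` for all `h` form a two-sided ideal containing `s`. -/
lemma isHIdeal_span {s : Set R} (hs : ∀ (h : H), ∀ x ∈ s, hact k H h x ∈ s) :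
    IsHIdeal k H (TwoSidedIdeal.span s : Set R) := by
  set I := TwoSidedIdeal.span s
  let stab : TwoSidedIdeal R := .mk' {x | ∀ h : H, hact k H h x ∈ I}
    (fun h => by simp [hact_zero])
    (fun hx hy h => by simpa [hact_add] using I.add_mem (hx h) (hy h))
    (fun hx h => by simpa [hact_neg] using I.neg_mem (hx h))
    (fun hy h => hact_mul_mem (fun _ h₂ => I.mul_mem_left _ _ (hy h₂)) h)
    (fun hx h => hact_mul_mem (fun h₁ _ => I.mul_mem_right _ _ (hx h₁)) h)
  have hI : I ≤ stab := TwoSidedIdeal.span_le.2 fun x hx =>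
    (TwoSidedIdeal.mem_mk' _ _ _ _ _ _ x).2 fun h => TwoSidedIdeal.subset_span (hs h x hx)
  exact isHIdeal_of_hact_mem I fun h x hx => (TwoSidedIdeal.mem_mk' _ _ _ _ _ _ x).1 (hI hx) h

/-- The additive closure of a union of ideals is the two-sided ideal it spans. -/
lemma isHIdeal_closure_sUnion {S : Set (Set R)} (hS : ∀ I ∈ S, IsHIdeal k H I) :
    IsHIdeal k H (AddSubgroup.closure (⋃₀ S) : Set R) := by
  have hspan : (TwoSidedIdeal.span (⋃₀ S) : Set R) = AddSubgroup.closure (⋃₀ S) :=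
    Set.ext fun _ => TwoSidedIdeal.mem_span_iff_mem_addSubgroup_closure_absorbing
      (by rintro _ _ ⟨I, hI, hy⟩; exact ⟨I, hI, (hS I hI).mul_mem_left trivial hy⟩)
      (by rintro _ _ ⟨I, hI, hy⟩; exact ⟨I, hI, (hS I hI).mul_mem_right hy trivial⟩)
  rw [← hspan]
  exact isHIdeal_span fun h x ⟨I, hI, hx⟩ => ⟨I, hI, (hS I hI).hsmul_mem h hx⟩

variable {B I J : Set R}

lemma IsHIdealIn.prodSeq_mem (hI : IsHIdealIn k H B I) {f : ℕ → R} (hf : ∀ i, f i ∈ I) :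
    ∀ n, prodSeq f n ∈ I
  | 0 => hf 0
  | n + 1 => hI.mul_mem_right (hI.prodSeq_mem hf n) (hI.subset (hf (n + 1)))

lemma IsHIdealIn.add (hI : IsHIdealIn k H B I) (hJ : IsHIdealIn k H B J)
    (hB : ∀ {x y : R}, x ∈ B → y ∈ B → x + y ∈ B) : IsHIdealIn k H B (I + J) := by
  refine ⟨?_, ⟨0, hI.zero_mem, 0, hJ.zero_mem, add_zero 0⟩, ?_, ?_, ?_, ?_, ?_⟩
  · rintro _ ⟨a, ha, b, hb, rfl⟩
    exact hB (hI.subset ha) (hJ.subset hb)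
  · rintro _ _ ⟨a, ha, b, hb, rfl⟩ ⟨a', ha', b', hb', rfl⟩
    exact ⟨a + a', hI.add_mem ha ha', b + b', hJ.add_mem hb hb', add_add_add_comm a a' b b'⟩
  · rintro _ ⟨a, ha, b, hb, rfl⟩
    exact ⟨-a, hI.neg_mem ha, -b, hJ.neg_mem hb, (neg_add a b).symm⟩
  · rintro x hx _ ⟨a, ha, b, hb, rfl⟩
    exact ⟨x * a, hI.mul_mem_left hx ha, x * b, hJ.mul_mem_left hx hb, (mul_add x a b).symm⟩
  · rintro _ ⟨a, ha, b, hb, rfl⟩ y hy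
    exact ⟨a * y, hI.mul_mem_right ha hy, b * y, hJ.mul_mem_right hb hy, (add_mul a b y).symm⟩
  · rintro h _ ⟨a, ha, b, hb, rfl⟩
    exact ⟨_, hI.hsmul_mem h ha, _, hJ.hsmul_mem h hb, (hact_add h a b).symm⟩

lemma IsHIdealIn.prodSeq_add_sub_mem (hI : IsHIdealIn k H B I) (hJ : IsHIdealIn k H B J)
    (hB : ∀ {x y : R}, x ∈ B → y ∈ B → x + y ∈ B) {a b : ℕ → R} (ha : ∀ i, a i ∈ I)
    (hb : ∀ i, b i ∈ J) : ∀ n, prodSeq (a + b) n - prodSeq a n ∈ J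
  | 0 => by simpa [prodSeq] using hb 0
  | n + 1 => by
    rw [prodSeq_succ, prodSeq_succ, Pi.add_apply,
      show ∀ p q c d : R, p * (c + d) - q * c = (p - q) * (c + d) + q * d by
        intros; noncomm_ring]
    exact hJ.add_mem
      (hJ.mul_mem_right (hI.prodSeq_add_sub_mem hJ hB ha hb n)
        (hB (hI.subset (ha _)) (hJ.subset (hb _))))
      (hJ.mul_mem_left (hI.subset (hI.prodSeq_mem ha n)) (hb _))

lemma IsHIdealIn.isNilpotentSetMod_add (hI : IsHIdealIn k H B I) (hJ : IsHIdealIn k H B J)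
    (hB : ∀ {x y : R}, x ∈ B → y ∈ B → x + y ∈ B) (hIJ : IsNilpotentSetMod I J) :
    IsNilpotentSetMod (I + J) J := by
  obtain ⟨n, hn⟩ := hIJ
  refine ⟨n, fun f hf => ?_⟩
  choose a ha b hb hab using hf
  obtain rfl : a + b = f := funext hab
  simpa using hJ.add_mem (hI.prodSeq_add_sub_mem hJ hB ha hb n) (hn a ha)

lemma IsHIdeal.mul_mul_mem_of_mem_span {K : Set R} (hI : IsHIdeal k H I)
    (hK : IsHIdealIn k H I K) {y : R} (hy : y ∈ TwoSidedIdeal.span K) :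
    y ∈ I ∧ ∀ a ∈ I, ∀ b ∈ I, a * y * b ∈ K := by
  let L : TwoSidedIdeal R := .mk' {y | y ∈ I ∧ ∀ a ∈ I, ∀ b ∈ I, a * y * b ∈ K}
    ⟨hI.zero_mem, fun _ _ _ _ => by simpa using hK.zero_mem⟩
    (fun ⟨hx, hx'⟩ ⟨hy, hy'⟩ => ⟨hI.add_mem hx hy, fun a ha b hb => by
      simpa [mul_add, add_mul] using hK.add_mem (hx' a ha b hb) (hy' a ha b hb)⟩)
    (fun ⟨hx, hx'⟩ => ⟨hI.neg_mem hx, fun a ha b hb => by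
      simpa using hK.neg_mem (hx' a ha b hb)⟩)
    (fun ⟨hy, hy'⟩ => ⟨hI.mul_mem_left trivial hy, fun a ha b hb => by
      simpa [mul_assoc] using hy' _ (hI.mul_mem_right ha trivial) b hb⟩)
    (fun ⟨hx, hx'⟩ => ⟨hI.mul_mem_right hx trivial, fun a ha b hb => by
      simpa [mul_assoc] using hx' a ha _ (hI.mul_mem_left trivial hb)⟩)
  have hKL : TwoSidedIdeal.span K ≤ L := TwoSidedIdeal.span_le.2 fun x hx =>
    (TwoSidedIdeal.mem_mk' _ _ _ _ _ _ x).2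
      ⟨hK.subset hx, fun a ha b hb => hK.mul_mem_right (hK.mul_mem_left ha hx) hb⟩
  exact (TwoSidedIdeal.mem_mk' _ _ _ _ _ _ y).1 (hKL hy)

theorem IsRadicalHIdeal.subset_of_isHSemiprimeIdeal {P : Set R} (hI : IsRadicalHIdeal k H I)
    (hP : IsHSemiprimeIdeal k H P) : I ⊆ P := by
  by_contra hIP
  have hinter : IsHIdeal k H (I ∩ P) := by
    simpa using isHIdeal_sInter (S := {I, P}) (by simp [hI.1, hP.1])
  obtain ⟨K, hK, hIPK, hne, hnil⟩ :=
    hI.2 (I ∩ P) (hinter.isHIdealIn inter_subset_left) fun h => hIP (h ▸ inter_subset_right)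
  have sandwich : ∀ y ∈ TwoSidedIdeal.span K, y ∈ I ∧ ∀ a ∈ I, ∀ b ∈ I, a * y * b ∈ K :=
    fun _ => hI.1.mul_mul_mem_of_mem_span hK
  have hnilP : IsNilpotentSetMod (TwoSidedIdeal.span K : Set R) P :=
    (IsNilpotentSetMod.of_mul_mul_mem (fun a ha b hb c hc =>
      (sandwich b hb).2 a (sandwich a ha).1 c (sandwich c hc).1) hnil).mono inter_subset_right
  have hspanP : (TwoSidedIdeal.span K : Set R) ⊆ P :=
    hP.2 _ (isHIdeal_span fun h _ hx => hK.hsmul_mem h hx) hnilP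
  exact hne (hIPK.antisymm fun x hx => ⟨hK.subset hx, hspanP (TwoSidedIdeal.subset_span hx)⟩)

end HIdeals

structure IsHBaerChain (k H : Type*) {R : Type*} [CommRing k] [Ring H] [Algebra k H]
    [Coalgebra k H] [NonUnitalRing R] [Module k R] [SMulCommClass k R R]
    [IsScalarTower k R R] [HModAlg k H R] (N : Ordinal → Set R) : Prop where
  zero : N 0 = {0}
  succ : ∀ α : Ordinal, N (α + 1) =
    ⋂₀ {J : Set R | IsHIdeal k H J ∧ N α ⊆ J ∧
      ∀ K : Set R, IsHIdeal k H K → N α ⊆ K → IsNilpotentSetMod K (N α) → K ⊆ J}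
  limit : ∀ β : Ordinal, Order.IsSuccLimit β → N β = {x : R | ∃ α < β, x ∈ N α}

namespace IsHBaerChain

variable {k H R : Type*} [CommRing k] [Ring H] [Algebra k H] [Coalgebra k H]
  [NonUnitalRing R] [Module k R] [SMulCommClass k R R] [IsScalarTower k R R] [HModAlg k H R]
  {N : Ordinal → Set R}

lemma subset_succ_of_isNilpotentSetMod (hN : IsHBaerChain k H N) {α : Ordinal} {K : Set R}
    (hK : IsHIdeal k H K) (hαK : N α ⊆ K) (hnil : IsNilpotentSetMod K (N α)) :
    K ⊆ N (α + 1) := by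
  rw [hN.succ]
  exact subset_sInter fun _ hJ => hJ.2.2 K hK hαK hnil

lemma subset_succ (hN : IsHBaerChain k H N) (α : Ordinal) : N α ⊆ N (α + 1) := by
  rw [hN.succ]
  exact subset_sInter fun _ hJ => hJ.2.1

lemma monotone (hN : IsHBaerChain k H N) : Monotone N := by
  intro α β hαβ
  induction β using Ordinal.limitRecOn with
  | zero => rw [nonpos_iff_eq_zero.1 hαβ]
  | add_one β ih =>
    rcases hαβ.lt_or_eq with h | rfl
    · exact (ih (Order.lt_add_one_iff.1 h)).trans (hN.subset_succ β)
    · exact le_rfl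
  | limit β hβ _ =>
    rcases hαβ.lt_or_eq with h | rfl
    · rw [hN.limit β hβ]
      exact fun x hx => ⟨α, h, hx⟩
    · exact le_rfl

lemma isHIdeal (hN : IsHBaerChain k H N) (α : Ordinal) : IsHIdeal k H (N α) := by
  induction α using Ordinal.limitRecOn with
  | zero =>
    rw [hN.zero]
    exact isHIdeal_zero
  | add_one α _ =>
    rw [hN.succ]
    exact isHIdeal_sInter fun _ hJ => hJ.1
  | limit β hβ ih =>
    have hunion : N β = ⋃ α : Iio β, N α := by
      rw [hN.limit β hβ]
      ext
      simp
    have : Nonempty (Iio β) := ⟨⟨0, hβ.pos⟩⟩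
    rw [hunion]
    exact isHIdeal_iUnion_of_directed (fun α => ih α α.2)
      (hN.monotone.comp (Subtype.mono_coe _)).directed_le

lemma subset_of_forall_isNilpotentSetMod (hN : IsHBaerChain k H N) {A : AddSubgroup R}
    {τ : Ordinal} (hstep : ∀ α, α + 1 ≤ τ → N α ⊆ A → ∀ K, IsHIdeal k H K → N α ⊆ K →
      IsNilpotentSetMod K (N α) → K ⊆ A) :
    ∀ α ≤ τ, N α ⊆ A := by
  intro α
  induction α using Ordinal.limitRecOn with
  | zero =>
    intro _
    rw [hN.zero]
    simp
  | add_one α ih =>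
    intro hα
    let S := {K | IsHIdeal k H K ∧ N α ⊆ K ∧ IsNilpotentSetMod K (N α)}
    -- `N (α + 1)` is the sum of the members of `S`.
    have hsum : N (α + 1) ⊆ AddSubgroup.closure (⋃₀ S) := by
      rw [hN.succ]
      refine sInter_subset_of_mem ⟨isHIdeal_closure_sUnion fun K hK => hK.1, ?_, ?_⟩
      · exact fun x hx => AddSubgroup.subset_closure
          ⟨N α, ⟨hN.isHIdeal α, subset_rfl, isNilpotentSetMod_self _⟩, hx⟩
      · exact fun K hK hαK hnil x hx => AddSubgroup.subset_closure ⟨K, ⟨hK, hαK, hnil⟩, hx⟩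
    have hαA := ih ((Order.le_succ α).trans hα)
    exact hsum.trans <| (AddSubgroup.closure_le A).2 <|
      sUnion_subset fun K hK => hstep α hα hαA K hK.1 hK.2.1 hK.2.2
  | limit β hβ ih =>
    intro hβτ
    rw [hN.limit β hβ]
    rintro x ⟨α, hα, hx⟩
    exact ih α hα (hα.le.trans hβτ) hx

lemma subset_of_isHSemiprimeIdeal (hN : IsHBaerChain k H N) {P : Set R}
    (hP : IsHSemiprimeIdeal k H P) (α : Ordinal) : N α ⊆ P :=
  hN.subset_of_forall_isNilpotentSetMod (A := hP.1.toAddSubgroup)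
    (fun _ _ hαP K hK _ hnil => hP.2 K hK (hnil.mono hαP)) α le_rfl

lemma isHSemiprimeIdeal_of_eq_succ (hN : IsHBaerChain k H N) {τ : Ordinal}
    (hτ : N τ = N (τ + 1)) : IsHSemiprimeIdeal k H (N τ) := by
  refine ⟨hN.isHIdeal τ, fun K hK hnil => ?_⟩
  have hsucc : K + N τ ⊆ N (τ + 1) :=
    hN.subset_succ_of_isNilpotentSetMod (hK.add (hN.isHIdeal τ) fun _ _ => trivial)
      (subset_add_right _ hK.zero_mem)
      (hK.isNilpotentSetMod_add (hN.isHIdeal τ) (fun _ _ => trivial) hnil)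
  exact (subset_add_left K (hN.isHIdeal τ).zero_mem).trans (hτ ▸ hsucc)

lemma isRadicalHIdeal (hN : IsHBaerChain k H N) (τ : Ordinal) :
    IsRadicalHIdeal k H (N τ) := by
  refine ⟨hN.isHIdeal τ, fun J hJ hJτ => ?_⟩
  by_contra! hnone
  refine hJτ <| hJ.subset.antisymm <|
    hN.subset_of_forall_isNilpotentSetMod (A := hJ.toAddSubgroup) ?_ τ le_rfl
  intro α hα hαJ K hK hαK hnil
  have hKτ : IsHIdealIn k H (N τ) K := hK.isHIdealIn <|
    (hN.subset_succ_of_isNilpotentSetMod hK hαK hnil).trans (hN.monotone hα)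
  have hKJ : J = K + J := by
    by_contra hne
    exact hnone _ (hKτ.add hJ (hN.isHIdeal τ).add_mem) (subset_add_right J hK.zero_mem) hne
      (hKτ.isNilpotentSetMod_add hJ (hN.isHIdeal τ).add_mem (hnil.mono hαJ))
  exact (subset_add_left K hJ.zero_mem).trans hKJ.symm.subset

end IsHBaerChain

/-- with `N_α` defined by the indicated transfinite recursion
(`N_{α+1}` is the sum of all `H`-ideals of `R` which are nilpotent mod `N_α`, i.e.
the smallest `H`-ideal containing all of them, and `N_β = ⋃_{α<β} N_α` at limits),
if `N_τ = N_{τ+1}` then `N_τ = r_{Hb}(R) = ⋂ {H-semiprime ideals of R}`. -/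
theorem stmt11 {k H R : Type*} [CommRing k] [Ring H] [Algebra k H] [Coalgebra k H]
    [NonUnitalRing R] [Module k R] [SMulCommClass k R R] [IsScalarTower k R R]
    [HModAlg k H R] (N : Ordinal → Set R)
    (h0 : N 0 = {0})
    (hsucc : ∀ α : Ordinal, N (α + 1) =
      ⋂₀ {J : Set R | IsHIdeal k H J ∧ N α ⊆ J ∧
        ∀ K : Set R, IsHIdeal k H K → N α ⊆ K → IsNilpotentSetMod K (N α) → K ⊆ J})
    (hlim : ∀ β : Ordinal, Order.IsSuccLimit β → N β = {x : R | ∃ α < β, x ∈ N α})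
    (τ : Ordinal) (hτ : N τ = N (τ + 1))
    (B : Set R) (hB : IsHBaerRadical k H B) :
    N τ = B ∧ N τ = ⋂₀ {P : Set R | IsHSemiprimeIdeal k H P} := by
  have hN : IsHBaerChain k H N := ⟨h0, hsucc, hlim⟩
  have hsemiprime := hN.isHSemiprimeIdeal_of_eq_succ hτ
  exact ⟨(hB.2 _ (hN.isRadicalHIdeal τ)).antisymm (hB.1.subset_of_isHSemiprimeIdeal hsemiprime),
    (subset_sInter fun P hP => hN.subset_of_isHSemiprimeIdeal hP τ).antisymm
      (sInter_subset_of_mem hsemiprime)⟩
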